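/- arXiv:0707.1589 — 3 statements merged into one kernel-verified Lean document; each statement's English description precedes it below -/
import Mathlib

section
/- Let d ≥ 1 be an integer, p > 1 a real number, ν ∈ ℝ, and let V : ℝ^d → ℝ be smooth with all partial derivatives of polynomial growth. Suppose u : ℝ^d → ℝ is a positive Schwartz function satisfying Δu + u^p − (ν + V(x)) u = 0 pointwise on ℝ^d. Then for each j ∈ {1, …, d}, ∫_{ℝ^d} (∂u/∂x_j) · [ −Δ(∂u/∂x_j) + (ν + V − p u^{p−1}) (∂u/∂x_j) ] dx = (1/2) ∫_{ℝ^d} u² · (∂²V/∂x_j²) dx. -/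
/-!
Differentiating the stationary equation in `x_j` and commuting `∂_j` with `Δ` gives
`L₊^{(V)} ∂_j u = -(∂_j V) u`. The integrand is therefore `-(1/2) ∂_j V · ∂_j (u²)`, and one
integration by parts, legitimate because `u²` is Schwartz and `∂_j V` has temperate growth,
turns it into `(1/2) u² ∂_j² V`.
-/

open MeasureTheory Real Filter Topology Asymptotics

/-- Partial derivative of `f` in the `j`-th coordinate direction. -/
noncomputable def pd {d : ℕ} {E : Type*} [NormedAddCommGroup E] [NormedSpace ℝ E]
    (f : EuclideanSpace ℝ (Fin d) → E) (j : Fin d) (x : EuclideanSpace ℝ (Fin d)) : E :=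
  fderiv ℝ f x (EuclideanSpace.single j 1)

/-- Euclidean Laplacian: sum of second partial derivatives. -/
noncomputable def lap {d : ℕ} {E : Type*} [NormedAddCommGroup E] [NormedSpace ℝ E]
    (f : EuclideanSpace ℝ (Fin d) → E) (x : EuclideanSpace ℝ (Fin d)) : E :=
  ∑ j, pd (pd f j) j x

open SchwartzMap

namespace Function.HasTemperateGrowth

variable {E F : Type*} [NormedAddCommGroup E] [NormedSpace ℝ E] [NormedAddCommGroup F]
  [NormedSpace ℝ F] {f : E → F}

theorem fderiv (hf : f.HasTemperateGrowth) : (fderiv ℝ f).HasTemperateGrowth := by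
  refine ⟨hf.1.fderiv_right le_rfl, fun n => ?_⟩
  obtain ⟨k, C, hC⟩ := hf.2 (n + 1)
  exact ⟨k, C, fun x => by simpa only [norm_iteratedFDeriv_fderiv] using hC x⟩

theorem fderiv_apply (hf : f.HasTemperateGrowth) (v : E) :
    (fun x => _root_.fderiv ℝ f x v).HasTemperateGrowth :=
  (ContinuousLinearMap.apply ℝ F v).hasTemperateGrowth.comp hf.fderiv

end Function.HasTemperateGrowth

namespace SchwartzMap

variable {E : Type*} [NormedAddCommGroup E] [NormedSpace ℝ E] [MeasurableSpace E] [BorelSpace E]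
  [FiniteDimensional ℝ E] {μ : Measure E} {g : E → ℝ}

theorem integrable_hasTemperateGrowth_mul [μ.HasTemperateGrowth] (hg : g.HasTemperateGrowth)
    (f : 𝓢(E, ℝ)) :
    Integrable (fun x => g x * f x) μ := by
  have h := (smulLeftCLM ℝ g f).integrable (μ := μ)
  rwa [smulLeftCLM_apply hg] at h

theorem integral_mul_fderiv_eq_neg_fderiv_mul [μ.IsAddHaarMeasure] (hg : g.HasTemperateGrowth)
    (f : 𝓢(E, ℝ)) (v : E) :
    ∫ x, g x * fderiv ℝ f x v ∂μ = -∫ x, fderiv ℝ g x v * f x ∂μ := by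
  have hf' : Integrable (fun x => g x * fderiv ℝ f x v) μ := by
    simpa [lineDerivOp_apply_eq_fderiv] using
      integrable_hasTemperateGrowth_mul hg (LineDeriv.lineDerivOp v f) (μ := μ)
  exact integral_mul_fderiv_eq_neg_fderiv_mul_of_integrable
    (integrable_hasTemperateGrowth_mul (hg.fderiv_apply v) f) hf'
    (integrable_hasTemperateGrowth_mul hg f) (fun x _ => hg.1.differentiable (by simp) x)
    (fun x _ => f.differentiableAt)

end SchwartzMap

section PartialDerivatives

variable {d : ℕ} {f g : EuclideanSpace ℝ (Fin d) → ℝ} {x : EuclideanSpace ℝ (Fin d)}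

theorem pd_add (hf : DifferentiableAt ℝ f x) (hg : DifferentiableAt ℝ g x) (j : Fin d) :
    pd (fun y => f y + g y) j x = pd f j x + pd g j x := by
  simp [pd, fderiv_fun_add hf hg]

theorem pd_sub (hf : DifferentiableAt ℝ f x) (hg : DifferentiableAt ℝ g x) (j : Fin d) :
    pd (fun y => f y - g y) j x = pd f j x - pd g j x := by
  simp [pd, fderiv_fun_sub hf hg]

theorem pd_mul (hf : DifferentiableAt ℝ f x) (hg : DifferentiableAt ℝ g x) (j : Fin d) :
    pd (fun y => f y * g y) j x = f x * pd g j x + g x * pd f j x := by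
  simp [pd, fderiv_fun_mul hf hg]

theorem pd_const_add (c : ℝ) (j : Fin d) : pd (fun y => c + f y) j = pd f j := by
  funext x
  simp [pd, fderiv_const_add]

theorem pd_rpow_const {p : ℝ} (hf : DifferentiableAt ℝ f x) (hx : f x ≠ 0 ∨ 1 ≤ p) (j : Fin d) :
    pd (fun y => f y ^ p) j x = p * f x ^ (p - 1) * pd f j x := by
  simp [pd, (hf.hasFDerivAt.rpow_const hx).fderiv, mul_assoc]

theorem pd_sum {ι : Type*} (s : Finset ι) {F : ι → EuclideanSpace ℝ (Fin d) → ℝ}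
    (hF : ∀ i ∈ s, DifferentiableAt ℝ (F i) x) (j : Fin d) :
    pd (fun y => ∑ i ∈ s, F i y) j x = ∑ i ∈ s, pd (F i) j x := by
  simp [pd, fderiv_fun_sum hF]

theorem ContDiff.pd {n : WithTop ℕ∞} (hf : ContDiff ℝ (n + 1) f) (j : Fin d) :
    ContDiff ℝ n (pd f j) :=
  (hf.fderiv_right le_rfl).clm_apply contDiff_const

theorem ContDiff.lap {n : WithTop ℕ∞} (hf : ContDiff ℝ (n + 2) f) : ContDiff ℝ n (lap f) := by
  have hf' : ContDiff ℝ (n + 1 + 1) f := by rwa [add_assoc, one_add_one_eq_two]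
  exact ContDiff.sum fun i _ => (hf'.pd i).pd i

theorem pd_pd_comm (hf : ContDiff ℝ 2 f) (i j : Fin d) : pd (pd f i) j = pd (pd f j) i := by
  funext x
  have hf' : Differentiable ℝ (fderiv ℝ f) :=
    (hf.fderiv_right (m := 1) (by norm_num)).differentiable one_ne_zero
  have hsecond : ∀ a b, pd (pd f a) b x =
      fderiv ℝ (fderiv ℝ f) x (EuclideanSpace.single b 1) (EuclideanSpace.single a 1) := by
    intro a b
    change fderiv ℝ (fun y => fderiv ℝ f y (EuclideanSpace.single a 1)) x _ = _
    simp [fderiv_clm_apply (hf' x) (differentiableAt_const _)]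
  rw [hsecond, hsecond, (hf.contDiffAt.isSymmSndFDerivAt (by simp)).eq]

theorem pd_lap_comm (hf : ContDiff ℝ 3 f) (j : Fin d) : pd (lap f) j = lap (pd f j) := by
  funext x
  have hf2 : ContDiff ℝ 2 f := hf.of_le (by norm_num)
  have hpd : ∀ i, ContDiff ℝ 2 (pd f i) := fun i => ContDiff.pd (n := 2) hf i
  unfold lap
  rw [pd_sum]
  · refine Finset.sum_congr rfl fun i _ => ?_
    rw [pd_pd_comm (hpd i), pd_pd_comm hf2]
  · exact fun i _ => ((hpd i).pd (n := 1) i).differentiable one_ne_zero x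

noncomputable def linearizedOperator {d : ℕ} (p ν : ℝ) (V u w : EuclideanSpace ℝ (Fin d) → ℝ)
    (x : EuclideanSpace ℝ (Fin d)) : ℝ :=
  -lap w x + (ν + V x - p * u x ^ (p - 1)) * w x

theorem linearizedOperator_pd {d : ℕ} {p ν : ℝ} {V u : EuclideanSpace ℝ (Fin d) → ℝ}
    (hV : Differentiable ℝ V) (hu : ContDiff ℝ 3 u) (hupos : ∀ x, 0 < u x)
    (hueq : ∀ x, lap u x + u x ^ p - (ν + V x) * u x = 0) (j : Fin d)
    (x : EuclideanSpace ℝ (Fin d)) :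
    linearizedOperator p ν V u (pd u j) x = -(pd V j x * u x) := by
  have hu' : Differentiable ℝ u := hu.differentiable (by norm_num)
  have hlap : Differentiable ℝ (lap u) := (ContDiff.lap (n := 1) hu).differentiable one_ne_zero
  have hderiv : pd (fun y => lap u y + u y ^ p - (ν + V y) * u y) j x = 0 := by
    simp [hueq, pd]
  have hux : u x ≠ 0 ∨ 1 ≤ p := Or.inl (hupos x).ne'
  have hpow : DifferentiableAt ℝ (fun y => u y ^ p) x := (hu' x).rpow_const hux
  have hpot : DifferentiableAt ℝ (fun y => ν + V y) x := (hV x).const_add ν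
  have hsum : DifferentiableAt ℝ (fun y => lap u y + u y ^ p) x := (hlap x).add hpow
  have hprod : DifferentiableAt ℝ (fun y => (ν + V y) * u y) x := hpot.mul (hu' x)
  rw [pd_sub hsum hprod, pd_add (hlap x) hpow, pd_rpow_const (hu' x) hux,
    pd_mul hpot (hu' x), pd_const_add, pd_lap_comm hu] at hderiv
  rw [linearizedOperator]
  linarith

theorem quadratic_form_translation_mode_general (d : ℕ) (p : ℝ)
    (ν : ℝ) (V : EuclideanSpace ℝ (Fin d) → ℝ)
    (hV : Function.HasTemperateGrowth V)
    (u : SchwartzMap (EuclideanSpace ℝ (Fin d)) ℝ)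
    (hupos : ∀ x, 0 < u x)
    (hueq : ∀ x, lap (⇑u) x + u x ^ p - (ν + V x) * u x = 0) :
    ∀ j : Fin d,
      ∫ x, pd (⇑u) j x *
          (-(lap (pd (⇑u) j) x) + (ν + V x - p * u x ^ (p - 1)) * pd (⇑u) j x)
        = (1 / 2) * ∫ x, (u x) ^ 2 * pd (pd V j) j x := by
  intro j
  set uSq : 𝓢(EuclideanSpace ℝ (Fin d), ℝ) := smulLeftCLM ℝ u u
  have huSq : ∀ x, uSq x = u x * u x := smulLeftCLM_apply_apply u.hasTemperateGrowth u
  have hpd_uSq : ∀ x, pd uSq j x = 2 * u x * pd u j x := fun x => by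
    rw [show ⇑uSq = fun y => u y * u y from funext huSq,
      pd_mul u.differentiableAt u.differentiableAt]
    ring
  calc ∫ x, pd u j x * linearizedOperator p ν V u (pd u j) x
      = ∫ x, -(1 / 2) * (pd V j x * pd uSq j x) := by
        congr 1 with x
        rw [linearizedOperator_pd (hV.1.differentiable (by simp)) (u.smooth 3) hupos hueq, hpd_uSq]
        ring
    _ = -(1 / 2) * ∫ x, pd V j x * pd uSq j x := integral_const_mul _ _
    _ = -(1 / 2) * -∫ x, pd (pd V j) j x * uSq x := by
        congr 1
        exact integral_mul_fderiv_eq_neg_fderiv_mul (hV.fderiv_apply _) uSq _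
    _ = (1 / 2) * ∫ x, pd (pd V j) j x * uSq x := by ring
    _ = (1 / 2) * ∫ x, (u x) ^ 2 * pd (pd V j) j x := by
        simp only [huSq, sq, mul_comm]

/-- the quadratic form of `L₊^{(V)}` at the translation mode `∂u/∂x_j`
equals `(1/2) ∫ u² ∂²V/∂x_j²`. -/
theorem quadratic_form_translation_mode (d : ℕ) (hd : 1 ≤ d) (p : ℝ) (hp : 1 < p)
    (ν : ℝ) (V : EuclideanSpace ℝ (Fin d) → ℝ)
    (hV : Function.HasTemperateGrowth V)
    (u : SchwartzMap (EuclideanSpace ℝ (Fin d)) ℝ)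
    (hupos : ∀ x, 0 < u x)
    (hueq : ∀ x, lap (⇑u) x + u x ^ p - (ν + V x) * u x = 0) :
    ∀ j : Fin d,
      ∫ x, pd (⇑u) j x *
          (-(lap (pd (⇑u) j) x) + (ν + V x - p * u x ^ (p - 1)) * pd (⇑u) j x)
        = (1 / 2) * ∫ x, (u x) ^ 2 * pd (pd V j) j x :=
  quadratic_form_translation_mode_general d p ν V hV u hupos hueq
end PartialDerivatives
end

section
/- Let p > 1 and ν > 0 be real numbers, and let u : ℝ → ℝ be a positive, twice continuously differentiable function satisfying u''(x) + u(x)^p − ν u(x) = 0 and the first integral (u'(x))² = ν u(x)² − (2/(p+1)) u(x)^{p+1} for all x ∈ ℝ. Then f := u^{(p+1)/2} satisfies −f''(x) − p u(x)^{p−1} f(x) + ν f(x) = −(1/4)(p−1)(p+3) ν · f(x) for all x ∈ ℝ; that is, f is an eigenfunction of the one-dimensional linearized operator L₊ = −d²/dx² + ν − p u^{p−1} with eigenvalue λ_min = −(1/4)(p−1)(p+3)ν. -/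
open Real

/-- `f = u^{(p+1)/2}` is an eigenfunction of the 1D linearized operator
`L₊ = −d²/dx² + ν − p u^{p−1}` with eigenvalue `λ_min = −(1/4)(p−1)(p+3)ν`. -/
theorem lowest_eigenfunction_1D (p ν : ℝ) (hp : 1 < p) (hν : 0 < ν)
    (u : ℝ → ℝ) (hupos : ∀ x, 0 < u x) (hu : ContDiff ℝ 2 u)
    (hueq : ∀ x, deriv (deriv u) x + u x ^ p - ν * u x = 0)
    (hfirst : ∀ x, (deriv u x) ^ 2 = ν * u x ^ 2 - (2 / (p + 1)) * u x ^ (p + 1)) :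
    ∀ x : ℝ,
      -(deriv (deriv (fun y => u y ^ ((p + 1) / 2))) x)
        - p * u x ^ (p - 1) * u x ^ ((p + 1) / 2)
        + ν * u x ^ ((p + 1) / 2)
      = -((1 / 4) * (p - 1) * (p + 3) * ν) * u x ^ ((p + 1) / 2) := by
  set α : ℝ := (p + 1) / 2 with hα
  have hud : Differentiable ℝ u := hu.differentiable (by norm_num)
  have hud2 : ContDiff ℝ 1 (deriv u) := by
    have h : ContDiff ℝ ((1:ℕ∞)+1) u := by exact_mod_cast hu
    exact_mod_cast (contDiff_succ_iff_deriv.mp h).2.2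
  have hud' : Differentiable ℝ (deriv u) := hud2.differentiable (by norm_num)
  intro x
  have hpos := hupos x
  have h1 : ∀ y, HasDerivAt (fun z => u z ^ α) (deriv u y * α * u y ^ (α - 1)) y := by
    intro y
    exact (hud y).hasDerivAt.rpow_const (Or.inl (hupos y).ne')
  have hderiv1 : deriv (fun z => u z ^ α) = fun y => deriv u y * (α * u y ^ (α - 1)) := by
    funext y
    rw [(h1 y).deriv]; ring
  have h2 : HasDerivAt (fun y => α * u y ^ (α - 1))
      (α * (deriv u x * (α - 1) * u x ^ (α - 1 - 1))) x :=
    (((hud x).hasDerivAt.rpow_const (Or.inl hpos.ne')) : HasDerivAt (fun z => u z ^ (α-1)) _ x).const_mul α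
  have h3 : HasDerivAt (fun y => deriv u y * (α * u y ^ (α - 1)))
      (deriv (deriv u) x * (α * u x ^ (α - 1))
        + deriv u x * (α * (deriv u x * (α - 1) * u x ^ (α - 1 - 1)))) x :=
    ((hud' x).hasDerivAt).mul h2
  have hdd : deriv (deriv (fun y => u y ^ α)) x
      = deriv (deriv u) x * (α * u x ^ (α - 1))
        + deriv u x * (α * (deriv u x * (α - 1) * u x ^ (α - 1 - 1))) := by
    rw [hderiv1]; exact h3.deriv
  -- rpow identities
  have e1 : u x * u x ^ (α - 1) = u x ^ α := by
    nth_rewrite 1 [← Real.rpow_one (u x)]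
    rw [← Real.rpow_add hpos]; ring_nf
  have e2 : u x ^ p * u x ^ (α - 1) = u x ^ (p - 1) * u x ^ α := by
    rw [← Real.rpow_add hpos, ← Real.rpow_add hpos]; ring_nf
  have e3 : u x ^ 2 * u x ^ (α - 1 - 1) = u x ^ α := by
    rw [show u x ^ 2 = u x ^ (2:ℝ) by rw [← Real.rpow_natCast (u x) 2]; norm_num,
      ← Real.rpow_add hpos]; ring_nf
  have e4 : u x ^ (p + 1) * u x ^ (α - 1 - 1) = u x ^ (p - 1) * u x ^ α := by
    rw [← Real.rpow_add hpos, ← Real.rpow_add hpos]; ring_nf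
  have hu'' : deriv (deriv u) x = ν * u x - u x ^ p := by linarith [hueq x]
  rw [hdd, hu'']
  have hsq := hfirst x
  have hp1 : p + 1 ≠ 0 := by linarith
  -- expand and finish
  have expand : (ν * u x - u x ^ p) * (α * u x ^ (α - 1))
        + deriv u x * (α * (deriv u x * (α - 1) * u x ^ (α - 1 - 1)))
      = ν * α * (u x * u x ^ (α - 1)) - α * (u x ^ p * u x ^ (α - 1))
        + α * (α - 1) * (ν * (u x ^ 2 * u x ^ (α - 1 - 1))
            - (2 / (p + 1)) * (u x ^ (p + 1) * u x ^ (α - 1 - 1))) := by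
    have : deriv u x * deriv u x = ν * u x ^ 2 - (2 / (p + 1)) * u x ^ (p + 1) := by
      rw [← sq]; exact hsq
    linear_combination (α * (α - 1) * u x ^ (α - 1 - 1)) * this
  rw [expand, e1, e2, e3, e4, hα]
  field_simp
  ring
end

section
/- Let d ≥ 1 be an integer, p > 1 a real number, and let U : ℝ^d → ℝ be a positive, radially symmetric Schwartz function satisfying ΔU + U^p − U = 0 pointwise on ℝ^d, with ∇U not identically zero. Then for every j ∈ {1, …, d}, ∫_{ℝ^d} U² dx = [ (p(2−d) + 2 + d)/(p−1) ] ∫_{ℝ^d} (∂U/∂x_j)² dx. -/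
/-!
Testing `ΔU + U^p - U = 0` against `U` gives the energy identity
`∫ |∇U|² = ∫ U^(p+1) - ∫ U²`; testing it against the dilation generator `x · ∇U` gives the
Pohozaev identity `(d - 2)/2 ∫ |∇U|² = d/(p+1) ∫ U^(p+1) - d/2 ∫ U²`. Eliminating `∫ U^(p+1)`
leaves `(p - 1) d ∫ U² = (p(2 - d) + 2 + d) ∫ |∇U|²`, and radial symmetry splits `∫ |∇U|²`
into `d` equal coordinate contributions.

All integrations by parts are between Schwartz functions: `U^p = U - ΔU` is itself Schwartz,
and the power enters only through the pointwise chain rule `U ∂_v(U^p) = p U^p ∂_v U`.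
-/

open MeasureTheory Real Filter Topology Asymptotics

open scoped LineDeriv Laplacian RealInnerProductSpace SchwartzMap

namespace SchwartzMap

theorem lineDerivOp_comm {E F : Type*} [NormedAddCommGroup E] [NormedSpace ℝ E]
    [NormedAddCommGroup F] [NormedSpace ℝ F] (f : 𝓢(E, F)) (v w : E) :
    ∂_{v} (∂_{w} f) = ∂_{w} (∂_{v} f) := by
  have hsnd : ∀ v w x, (∂_{v} (∂_{w} f) : 𝓢(E, F)) x = fderiv ℝ (fderiv ℝ f) x v w := by
    intro v w x
    have hdiff : DifferentiableAt ℝ (fderiv ℝ f) x :=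
      ((f.smooth 2).fderiv_right (m := 1) (by norm_num)).differentiable (by norm_num) x
    change fderiv ℝ (fun y ↦ fderiv ℝ f y w) x v = _
    rw [fderiv_clm_apply hdiff (differentiableAt_const w)]
    simp
  ext x
  rw [hsnd, hsnd, (f.contDiffAt 2).isSymmSndFDerivAt (by simp) v w]

section IntegrationByParts

variable {D : Type*} [NormedAddCommGroup D] [NormedSpace ℝ D] [FiniteDimensional ℝ D]
  [MeasurableSpace D] [BorelSpace D] {μ : Measure D} [μ.IsAddHaarMeasure]

theorem integrable_mul (f g : 𝓢(D, ℝ)) : Integrable (fun x ↦ f x * g x) μ :=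
  (bilinLeftCLM (ContinuousLinearMap.mul ℝ ℝ) g.hasTemperateGrowth f).integrable

theorem integrable_clm_mul_mul (ℓ : D →L[ℝ] ℝ) (f g : 𝓢(D, ℝ)) :
    Integrable (fun x ↦ ℓ x * (f x * g x)) μ := by
  simpa [smulLeftCLM_apply_apply ℓ.hasTemperateGrowth, mul_assoc] using
    integrable_mul (μ := μ) (smulLeftCLM ℝ ℓ f) g

theorem integral_clm_mul_lineDerivOp_mul (ℓ : D →L[ℝ] ℝ) (f g : 𝓢(D, ℝ)) (v : D) :
    ∫ x, ℓ x * (∂_{v} f x * g x) ∂μ + ∫ x, ℓ x * (f x * ∂_{v} g x) ∂μ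
      = -ℓ v * ∫ x, f x * g x ∂μ := by
  have hprod : ∀ x, ℓ x * fderiv ℝ (fun y ↦ f y * g y) x v
      = ℓ x * (∂_{v} f x * g x) + ℓ x * (f x * ∂_{v} g x) := fun x ↦ by
    rw [fderiv_fun_mul f.differentiableAt g.differentiableAt]
    simp only [lineDerivOp_apply_eq_fderiv, add_apply, smul_apply, smul_eq_mul]
    ring
  have hint_left := integrable_clm_mul_mul (μ := μ) ℓ (∂_{v} f) g
  have hint_right := integrable_clm_mul_mul (μ := μ) ℓ f (∂_{v} g)
  have hibp := integral_mul_fderiv_eq_neg_fderiv_mul_of_integrable (μ := μ) (f := ℓ)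
    (g := fun x ↦ f x * g x) (v := v)
    (by simpa using (integrable_mul f g).const_mul (ℓ v))
    (by simp only [hprod]; exact hint_left.add hint_right)
    (integrable_clm_mul_mul ℓ f g)
    (fun _ _ ↦ ℓ.differentiableAt) (fun _ _ ↦ f.differentiableAt.mul g.differentiableAt)
  simp only [hprod, ContinuousLinearMap.fderiv] at hibp
  rw [← integral_add hint_left hint_right, hibp, integral_const_mul, neg_mul]

end IntegrationByParts

section Laplacian

variable {E ι : Type*} [NormedAddCommGroup E] [InnerProductSpace ℝ E] [FiniteDimensional ℝ E]
  [Fintype ι] (b : OrthonormalBasis ι ℝ E)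

theorem laplacian_apply_eq_sum (U : 𝓢(E, ℝ)) (x : E) :
    Δ U x = ∑ k, ∂_{b k} (∂_{b k} U) x := by
  rw [laplacian_eq_sum b, sum_apply]

variable [MeasurableSpace E] [BorelSpace E] {μ : Measure E} [μ.IsAddHaarMeasure]

theorem integrable_inner_mul_mul (c : E) (f g : 𝓢(E, ℝ)) :
    Integrable (fun x ↦ ⟪c, x⟫ * (f x * g x)) μ := by
  simpa using integrable_clm_mul_mul (μ := μ) (innerSL ℝ c) f g

theorem integral_mul_laplacian_eq_neg_sum (U : 𝓢(E, ℝ)) :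
    ∫ x, U x * Δ U x ∂μ = -∑ k, ∫ x, (∂_{b k} U x) ^ 2 ∂μ := by
  simp_rw [laplacian_apply_eq_sum b, Finset.mul_sum]
  rw [integral_finsetSum _ fun k _ ↦ integrable_mul _ _, ← Finset.sum_neg_distrib]
  refine Finset.sum_congr rfl fun k _ ↦ ?_
  rw [integral_mul_lineDerivOp_right_eq_neg_left]
  simp_rw [sq]

theorem integral_inner_mul_lineDerivOp_mul_lineDerivOp_lineDerivOp [DecidableEq ι]
    (U : 𝓢(E, ℝ)) (j k : ι) :
    ∫ x, ⟪b j, x⟫ * (∂_{b j} U x * ∂_{b k} (∂_{b k} U) x) ∂μ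
      = (∫ x, (∂_{b k} U x) ^ 2 ∂μ) / 2 - if j = k then ∫ x, (∂_{b j} U x) ^ 2 ∂μ else 0 := by
  -- Move one `∂_{b k}` onto `⟪b j, x⟫ ∂_{b j} U`; the remaining term is
  -- `∂_{b j} ∂_{b k} U · ∂_{b k} U = ½ ∂_{b j} (∂_{b k} U)²`, integrated by parts once more.
  have hcross := integral_clm_mul_lineDerivOp_mul (μ := μ) (innerSL ℝ (b j)) (∂_{b j} U)
    (∂_{b k} U) (b k)
  have hsq := integral_clm_mul_lineDerivOp_mul (μ := μ) (innerSL ℝ (b j)) (∂_{b k} U)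
    (∂_{b k} U) (b j)
  rw [lineDerivOp_comm U (b k) (b j)] at hcross
  have hswap : ∀ x, ⟪b j, x⟫ * (∂_{b k} U x * ∂_{b j} (∂_{b k} U) x)
      = ⟪b j, x⟫ * (∂_{b j} (∂_{b k} U) x * ∂_{b k} U x) := fun x ↦ by ring
  simp only [innerSL_apply_apply, b.inner_eq_ite, ite_true, hswap] at hcross hsq
  simp_rw [sq]
  split_ifs at hcross ⊢ with hjk
  · subst hjk
    linarith
  · linarith

theorem sum_integral_inner_mul_lineDerivOp_mul_laplacian (U : 𝓢(E, ℝ)) :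
    ∑ j, ∫ x, ⟪b j, x⟫ * (∂_{b j} U x * Δ U x) ∂μ
      = (Fintype.card ι - 2) / 2 * ∑ k, ∫ x, (∂_{b k} U x) ^ 2 ∂μ := by
  classical
  conv_lhs => simp only [laplacian_apply_eq_sum b, Finset.mul_sum]
  simp_rw [integral_finsetSum _ fun k _ ↦ integrable_inner_mul_mul _ _ _,
    integral_inner_mul_lineDerivOp_mul_lineDerivOp_lineDerivOp, Finset.sum_sub_distrib,
    Finset.sum_ite_eq, Finset.mem_univ, if_true, Finset.sum_const, Finset.card_univ, nsmul_eq_mul,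
    ← Finset.sum_div]
  ring

theorem integral_inner_mul_lineDerivOp_mul_self (U : 𝓢(E, ℝ)) (j : ι) :
    ∫ x, ⟪b j, x⟫ * (∂_{b j} U x * U x) ∂μ = -(∫ x, U x ^ 2 ∂μ) / 2 := by
  have h := integral_clm_mul_lineDerivOp_mul (μ := μ) (innerSL ℝ (b j)) U U (b j)
  simp only [innerSL_apply_apply, real_inner_self_eq_norm_sq, b.norm_eq_one,
    mul_comm (U _) (∂_{b j} U _)] at h
  simp_rw [sq]
  linarith

theorem integral_inner_mul_lineDerivOp_mul_of_mul_lineDerivOp_eq (U W : 𝓢(E, ℝ)) (p : ℝ)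
    (hW : ∀ (v : E) x, U x * ∂_{v} W x = p * (∂_{v} U x * W x)) (j : ι) :
    (p + 1) * ∫ x, ⟪b j, x⟫ * (∂_{b j} U x * W x) ∂μ = -∫ x, U x * W x ∂μ := by
  have h := integral_clm_mul_lineDerivOp_mul (μ := μ) (innerSL ℝ (b j)) U W (b j)
  simp only [innerSL_apply_apply, real_inner_self_eq_norm_sq, b.norm_eq_one, hW,
    mul_left_comm _ p, integral_const_mul] at h
  linarith

theorem pohozaev_energy_identity (U W : 𝓢(E, ℝ)) (p : ℝ) (hΔ : ∀ x, Δ U x = U x - W x)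
    (hW : ∀ (v : E) x, U x * ∂_{v} W x = p * (∂_{v} U x * W x)) :
    (p - 1) * Fintype.card ι * ∫ x, U x ^ 2 ∂μ
      = (p * (2 - Fintype.card ι) + 2 + Fintype.card ι) * ∑ k, ∫ x, (∂_{b k} U x) ^ 2 ∂μ := by
  have henergy : -∑ k, ∫ x, (∂_{b k} U x) ^ 2 ∂μ = ∫ x, U x ^ 2 ∂μ - ∫ x, U x * W x ∂μ := by
    rw [← integral_mul_laplacian_eq_neg_sum b]
    simp_rw [hΔ, mul_sub]
    rw [integral_sub (integrable_mul U U) (integrable_mul U W)]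
    simp_rw [sq]
  have hvirial : ∀ j, (p + 1) * ∫ x, ⟪b j, x⟫ * (∂_{b j} U x * Δ U x) ∂μ
      = ∫ x, U x * W x ∂μ - (p + 1) * (∫ x, U x ^ 2 ∂μ) / 2 := by
    intro j
    simp_rw [hΔ, mul_sub]
    rw [integral_sub (integrable_inner_mul_mul _ _ _) (integrable_inner_mul_mul _ _ _), mul_sub,
      integral_inner_mul_lineDerivOp_mul_self b U j,
      integral_inner_mul_lineDerivOp_mul_of_mul_lineDerivOp_eq b U W p hW j]
    ring
  have hpohozaev := congrArg ((p + 1) * ·)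
    (sum_integral_inner_mul_lineDerivOp_mul_laplacian b U (μ := μ))
  rw [Finset.mul_sum] at hpohozaev
  simp only [hvirial, Finset.sum_const, Finset.card_univ, nsmul_eq_mul] at hpohozaev
  linear_combination 2 * (Fintype.card ι : ℝ) * henergy - 2 * hpohozaev

end Laplacian

end SchwartzMap

theorem integral_comp_fderiv_apply_linearIsometryEquiv_of_invariant {E : Type*}
    [NormedAddCommGroup E] [InnerProductSpace ℝ E] [FiniteDimensional ℝ E]
    [MeasurableSpace E] [BorelSpace E]
    {f : E → ℝ} (T : E ≃ₗᵢ[ℝ] E) (hf : ∀ x, f (T x) = f x) (G : ℝ → ℝ) (v : E) :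
    ∫ x, G (fderiv ℝ f x (T v)) = ∫ x, G (fderiv ℝ f x v) := by
  have hfT : f ∘ T.toContinuousLinearEquiv = f := funext hf
  have hchain : ∀ x, fderiv ℝ f x v = fderiv ℝ f (T x) (T v) := fun x ↦ by
    conv_lhs => rw [← hfT, T.toContinuousLinearEquiv.comp_right_fderiv]
    rfl
  simp_rw [hchain]
  exact (T.measurePreserving.integral_comp T.toHomeomorph.measurableEmbedding
    (fun y ↦ G (fderiv ℝ f y (T v)))).symm

theorem integral_comp_fderiv_single_eq_of_radial {ι : Type*} [Fintype ι] [DecidableEq ι]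
    {f : EuclideanSpace ℝ ι → ℝ} {φ : ℝ → ℝ} (hf : ∀ x, f x = φ ‖x‖) (G : ℝ → ℝ) (j k : ι) :
    ∫ x, G (fderiv ℝ f x (EuclideanSpace.single j 1))
      = ∫ x, G (fderiv ℝ f x (EuclideanSpace.single k 1)) := by
  have h := integral_comp_fderiv_apply_linearIsometryEquiv_of_invariant (f := f)
    (LinearIsometryEquiv.piLpCongrLeft 2 ℝ ℝ (Equiv.swap k j))
    (fun x ↦ by rw [hf, hf, LinearIsometryEquiv.norm_map]) G (EuclideanSpace.single k 1)
  rwa [EuclideanSpace.piLpCongrLeft_single, Equiv.swap_apply_left] at h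

theorem mul_fderiv_rpow_const_apply {E : Type*} [NormedAddCommGroup E] [NormedSpace ℝ E]
    {f : E → ℝ} {x : E} (hf : DifferentiableAt ℝ f x) (hx : 0 < f x) (p : ℝ) (v : E) :
    f x * fderiv ℝ (fun y ↦ f y ^ p) x v = p * (fderiv ℝ f x v * f x ^ p) := by
  rw [(hf.hasFDerivAt.rpow_const (Or.inl hx.ne')).fderiv, smul_apply, smul_eq_mul,
    Real.rpow_sub_one hx.ne']
  field_simp

theorem lap_apply_eq_laplacian {d : ℕ} (U : 𝓢(EuclideanSpace ℝ (Fin d), ℝ))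
    (x : EuclideanSpace ℝ (Fin d)) : lap ⇑U x = Δ U x := by
  simp only [SchwartzMap.laplacian_apply_eq_sum (EuclideanSpace.basisFun (Fin d) ℝ),
    EuclideanSpace.basisFun_apply]
  rfl

theorem eigenvalue_ratio_identity_general (d : ℕ) (p : ℝ) (hp : 1 < p)
    (U : SchwartzMap (EuclideanSpace ℝ (Fin d)) ℝ)
    (φ : ℝ → ℝ) (hrad : ∀ x, U x = φ ‖x‖)
    (hUpos : ∀ x, 0 < U x)
    (hUeq : ∀ x, lap (⇑U) x + U x ^ p - U x = 0) :
    ∀ j : Fin d,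
      ∫ x, (U x) ^ 2
        = ((p * (2 - (d : ℝ)) + 2 + (d : ℝ)) / (p - 1)) * ∫ x, (pd (⇑U) j x) ^ 2 := by
  intro j
  let b := EuclideanSpace.basisFun (Fin d) ℝ
  let W := U - Δ U
  have hW : ⇑W = fun x ↦ U x ^ p := funext fun x ↦ by
    simp only [W, sub_apply, ← lap_apply_eq_laplacian]
    linarith [hUeq x]
  have hΔ : ∀ x, Δ U x = U x - W x := fun x ↦ by simp [W]
  have hchain : ∀ (v : EuclideanSpace ℝ (Fin d)) x, U x * ∂_{v} W x = p * (∂_{v} U x * W x) := by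
    intro v x
    simp only [SchwartzMap.lineDerivOp_apply_eq_fderiv, hW]
    exact mul_fderiv_rpow_const_apply U.differentiableAt (hUpos x) p v
  have hradial : ∀ k, ∫ x, (∂_{b k} U x) ^ 2 = ∫ x, (pd (⇑U) j x) ^ 2 := fun k ↦ by
    simpa [b, pd, SchwartzMap.lineDerivOp_apply_eq_fderiv] using
      integral_comp_fderiv_single_eq_of_radial hrad (· ^ 2) k j
  have key := SchwartzMap.pohozaev_energy_identity (μ := volume) b U W p hΔ hchain
  simp only [hradial, Finset.sum_const, Finset.card_univ, Fintype.card_fin, nsmul_eq_mul] at key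
  have hd : (d : ℝ) ≠ 0 := Nat.cast_ne_zero.mpr j.pos.ne'
  rw [div_mul_eq_mul_div, eq_div_iff (sub_ne_zero.mpr hp.ne')]
  apply mul_left_cancel₀ hd
  linear_combination key

/-- the ratio identity `∫U² = δ ∫(∂U/∂x_j)²` with
`δ = (p(2−d)+2+d)/(p−1)`, for a positive radial Schwartz ground state. -/
theorem eigenvalue_ratio_identity (d : ℕ) (hd : 1 ≤ d) (p : ℝ) (hp : 1 < p)
    (U : SchwartzMap (EuclideanSpace ℝ (Fin d)) ℝ)
    (φ : ℝ → ℝ) (hrad : ∀ x, U x = φ ‖x‖)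
    (hUpos : ∀ x, 0 < U x)
    (hUeq : ∀ x, lap (⇑U) x + U x ^ p - U x = 0)
    (hgrad : ∃ (x : EuclideanSpace ℝ (Fin d)) (j : Fin d), pd (⇑U) j x ≠ 0) :
    ∀ j : Fin d,
      ∫ x, (U x) ^ 2
        = ((p * (2 - (d : ℝ)) + 2 + (d : ℝ)) / (p - 1)) * ∫ x, (pd (⇑U) j x) ^ 2 :=
  eigenvalue_ratio_identity_general d p hp U φ hrad hUpos hUeq
end
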